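/- arXiv:1506.07544 — 6 statements merged into one kernel-verified Lean document; each statement's English description precedes it below -/
import Mathlib

section
/- A commutative ring R is locally stable if and only if for every c ∈ R and every u ∈ R whose image is a unit in R/cR, there exists a stable element a ∈ R with u − a ∈ cR. -/
/-- A commutative ring has stable range 1. -/
def HasStableRange1 (R : Type*) [CommRing R] : Prop :=
  ∀ a b : R, Ideal.span {a} ⊔ Ideal.span {b} = ⊤ → ∃ y : R, IsUnit (a + b * y)

/-- An element `a` is stable if `R/aR` has stable range 1. -/
def IsStableElem {R : Type*} [CommRing R] (a : R) : Prop :=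
  HasStableRange1 (R ⧸ Ideal.span {a})

/-- A commutative ring is locally stable. -/
def LocallyStable (R : Type*) [CommRing R] : Prop :=
  ∀ a b : R, Ideal.span {a} ⊔ Ideal.span {b} = ⊤ →
    ∃ y : R, HasStableRange1 (R ⧸ Ideal.span {a + b * y})

/-- A clean ring: every element is the sum of an idempotent and a unit. -/
def IsCleanRing (R : Type*) [CommRing R] : Prop :=
  ∀ a : R, ∃ e u : R, IsIdempotentElem e ∧ IsUnit u ∧ a = e + u

/-- A ring has neat range 1. -/
def NeatRange1 (R : Type*) [CommRing R] : Prop :=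
  ∀ a b : R, Ideal.span {a} ⊔ Ideal.span {b} = ⊤ →
    ∃ y : R, IsCleanRing (R ⧸ Ideal.span {a + b * y})

/-- A ring has almost stable range 1: every proper homomorphic image has stable range 1. -/
def AlmostStableRange1 (R : Type*) [CommRing R] : Prop :=
  ∀ I : Ideal R, I ≠ ⊥ → HasStableRange1 (R ⧸ I)

/-- An elementary divisor ring: every rectangular matrix admits diagonal reduction. -/
def ElementaryDivisorRing (R : Type*) [CommRing R] : Prop :=
  ∀ (m n : ℕ) (A : Matrix (Fin m) (Fin n) R),
    ∃ (P : Matrix (Fin m) (Fin m) R) (Q : Matrix (Fin n) (Fin n) R),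
      IsUnit P ∧ IsUnit Q ∧
      (∀ (i : Fin m) (j : Fin n), (i : ℕ) ≠ (j : ℕ) → (P * A * Q) i j = 0) ∧
      (∀ (i i' : Fin m) (j j' : Fin n), (i : ℕ) = (j : ℕ) → (i' : ℕ) = (j' : ℕ) →
        (i' : ℕ) = (i : ℕ) + 1 → (P * A * Q) i j ∣ (P * A * Q) i' j')

/-- A ring is strongly completable. -/
def StronglyCompletable (R : Type*) [CommRing R] : Prop :=
  ∀ (n : ℕ) (hn : 0 < n) (a : Fin n → R) (d : R),
    (⨆ i, Ideal.span {a i}) = Ideal.span {d} →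
    ∃ A : Matrix (Fin n) (Fin n) R, (∀ j, A ⟨0, hn⟩ j = a j) ∧ A.det = d

theorem stmt0 (R : Type*) [CommRing R] :
    LocallyStable R ↔
      ∀ c u : R, IsUnit (Ideal.Quotient.mk (Ideal.span {c}) u) →
        ∃ a : R, IsStableElem a ∧ u - a ∈ Ideal.span {c} := by
  have key : ∀ a b : R, (Ideal.span {a} ⊔ Ideal.span {b} = ⊤) ↔
      ∃ x y : R, x * a + y * b = 1 := by
    intro a b
    rw [← Ideal.span_union, Set.singleton_union, Ideal.eq_top_iff_one, Ideal.mem_span_pair]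
  constructor
  · intro hls c u hu
    obtain ⟨w, hw⟩ := isUnit_iff_exists_inv.mp hu
    obtain ⟨v, rfl⟩ := Ideal.Quotient.mk_surjective w
    have hmem : u * v - 1 ∈ Ideal.span {c} := by
      rw [← Ideal.Quotient.eq_zero_iff_mem, map_sub, map_mul, hw, map_one, sub_self]
    obtain ⟨t, ht⟩ := Ideal.mem_span_singleton'.mp hmem
    have htop : Ideal.span {u} ⊔ Ideal.span {c} = ⊤ := by
      rw [key]
      exact ⟨v, -t, by rw [mul_comm v u]; linear_combination -ht⟩
    obtain ⟨y, hy⟩ := hls u c htop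
    refine ⟨u + c * y, hy, ?_⟩
    have : u - (u + c * y) = c * (-y) := by ring
    rw [this]
    exact Ideal.mem_span_singleton'.mpr ⟨-y, (mul_comm c (-y)).symm⟩
  · intro h a b htop
    obtain ⟨x, z, hxz⟩ := (key a b).mp htop
    have hu : IsUnit (Ideal.Quotient.mk (Ideal.span {b}) a) := by
      refine isUnit_iff_exists_inv.mpr ⟨Ideal.Quotient.mk _ x, ?_⟩
      rw [← map_mul, ← map_one (Ideal.Quotient.mk (Ideal.span {b}))]
      apply Ideal.Quotient.eq.mpr
      exact Ideal.mem_span_singleton'.mpr ⟨-z, by linear_combination -hxz⟩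
    obtain ⟨s, hs, hmem⟩ := h b a hu
    obtain ⟨t, ht⟩ := Ideal.mem_span_singleton'.mp hmem
    refine ⟨-t, ?_⟩
    have : a + b * (-t) = s := by linear_combination -ht
    rw [this]
    exact hs
end

section
/- Let I be an ideal of a commutative ring R with I ⊆ J(R), the Jacobson radical. Then R is locally stable if and only if R/I is locally stable. -/
/-!
Stable range 1 and comaximality only involve units and the equation `c a + d b = 1`, and both
lift along a surjection `f : S → T` whose kernel lies in the Jacobson radical: such an `f` reflects
units, so an element mapping to `1` is already a unit. Applying this to `R → R/I` and to the
induced surjections `R/cR → (R/I)/c̄(R/I)`, whose kernels again lie in the Jacobson radical,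
transfers local stability in both directions.
-/

open Ideal

section

variable {S T : Type*} [CommRing S] [CommRing T]

theorem span_singleton_sup_span_singleton_eq_top_iff {a b : S} :
    span {a} ⊔ span {b} = ⊤ ↔ IsCoprime a b := by
  rw [← isCoprime_iff_sup_eq, isCoprime_span_singleton_iff]

theorem map_mem_jacobson_bot_of_surjective {f : S →+* T} (hf : Function.Surjective f) {x : S}
    (hx : x ∈ jacobson (⊥ : Ideal S)) : f x ∈ jacobson (⊥ : Ideal T) :=
  mem_jacobson_bot.2 fun y => by
    obtain ⟨z, rfl⟩ := hf y
    simpa using (mem_jacobson_bot.1 hx z).map f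

theorem isLocalHom_of_surjective_of_ker_le_jacobson {f : S →+* T} (hf : Function.Surjective f)
    (hker : RingHom.ker f ≤ jacobson ⊥) : IsLocalHom f := by
  refine ⟨fun x hx => ?_⟩
  obtain ⟨y, hy⟩ := hf ↑hx.unit⁻¹
  have hxy : x * y - 1 ∈ RingHom.ker f := by simp [hy]
  have hunit : IsUnit (x * y) := by simpa using mem_jacobson_bot.1 (hker hxy) 1
  exact isUnit_of_mul_isUnit_left hunit

theorem IsCoprime.of_map {f : S →+* T} (hf : Function.Surjective f) [IsLocalHom f] {a b : S}
    (h : IsCoprime (f a) (f b)) : IsCoprime a b := by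
  obtain ⟨u, v, huv⟩ := h
  obtain ⟨c, rfl⟩ := hf u
  obtain ⟨d, rfl⟩ := hf v
  have hunit : IsUnit (c * a + d * b) := (isUnit_map_iff f _).1 (by simp [huv])
  obtain ⟨w, hw⟩ := hunit.exists_left_inv
  exact ⟨w * c, w * d, by linear_combination hw⟩

theorem hasStableRange1_iff_of_surjective (f : S →+* T) (hf : Function.Surjective f)
    [IsLocalHom f] : HasStableRange1 S ↔ HasStableRange1 T := by
  simp only [HasStableRange1, span_singleton_sup_span_singleton_eq_top_iff]
  constructor
  · intro hS a b hab
    obtain ⟨a, rfl⟩ := hf a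
    obtain ⟨b, rfl⟩ := hf b
    obtain ⟨y, hy⟩ := hS a b (hab.of_map hf)
    exact ⟨f y, by simpa using hy.map f⟩
  · intro hT a b hab
    obtain ⟨y, hy⟩ := hT (f a) (f b) (hab.map f)
    obtain ⟨y, rfl⟩ := hf y
    exact ⟨y, (isUnit_map_iff f _).1 (by simpa using hy)⟩

theorem span_singleton_le_comap_span_singleton_map (f : S →+* T) (c : S) :
    span {c} ≤ (span {f c}).comap f :=
  span_le.2 (by simp)

abbrev quotientSpanSingletonMap (f : S →+* T) (c : S) : S ⧸ span {c} →+* T ⧸ span {f c} :=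
  quotientMap _ f (span_singleton_le_comap_span_singleton_map f c)

theorem ker_quotientSpanSingletonMap_le_jacobson {f : S →+* T} (hf : Function.Surjective f)
    (hker : RingHom.ker f ≤ jacobson ⊥) (c : S) :
    RingHom.ker (quotientSpanSingletonMap f c) ≤ jacobson ⊥ := by
  intro x hx
  obtain ⟨r, rfl⟩ := Ideal.Quotient.mk_surjective x
  rw [RingHom.mem_ker, quotientMap_mk, Ideal.Quotient.eq_zero_iff_mem, mem_span_singleton'] at hx
  obtain ⟨t, ht⟩ := hx
  obtain ⟨s, rfl⟩ := hf t
  have hrs : r - s * c ∈ RingHom.ker f := by simp [ht]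
  have heq : Ideal.Quotient.mk (span {c}) r = Ideal.Quotient.mk (span {c}) (r - s * c) :=
    Ideal.Quotient.eq.2 (by simpa using mul_mem_left _ s (mem_span_singleton_self c))
  rw [heq]
  exact map_mem_jacobson_bot_of_surjective Ideal.Quotient.mk_surjective (hker hrs)

theorem hasStableRange1_quotient_span_singleton_iff {f : S →+* T} (hf : Function.Surjective f)
    (hker : RingHom.ker f ≤ jacobson ⊥) (c : S) :
    HasStableRange1 (S ⧸ span {c}) ↔ HasStableRange1 (T ⧸ span {f c}) :=
  have hsurj := quotientMap_surjective (H := span_singleton_le_comap_span_singleton_map f c) hf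
  have := isLocalHom_of_surjective_of_ker_le_jacobson hsurj
    (ker_quotientSpanSingletonMap_le_jacobson hf hker c)
  hasStableRange1_iff_of_surjective _ hsurj

theorem locallyStable_iff_of_surjective {f : S →+* T} (hf : Function.Surjective f)
    (hker : RingHom.ker f ≤ jacobson ⊥) : LocallyStable S ↔ LocallyStable T := by
  have := isLocalHom_of_surjective_of_ker_le_jacobson hf hker
  simp only [LocallyStable, span_singleton_sup_span_singleton_eq_top_iff]
  constructor
  · intro hS a b hab
    obtain ⟨a, rfl⟩ := hf a
    obtain ⟨b, rfl⟩ := hf b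
    obtain ⟨y, hy⟩ := hS a b (hab.of_map hf)
    refine ⟨f y, ?_⟩
    rw [← map_mul, ← map_add]
    exact (hasStableRange1_quotient_span_singleton_iff hf hker _).1 hy
  · intro hT a b hab
    obtain ⟨y, hy⟩ := hT (f a) (f b) (hab.map f)
    obtain ⟨y, rfl⟩ := hf y
    refine ⟨y, (hasStableRange1_quotient_span_singleton_iff hf hker _).2 ?_⟩
    rwa [map_add, map_mul]

end

theorem stmt3 (R : Type*) [CommRing R] (I : Ideal R)
    (hI : I ≤ Ideal.jacobson (⊥ : Ideal R)) :
    LocallyStable R ↔ LocallyStable (R ⧸ I) :=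
  locallyStable_iff_of_surjective Ideal.Quotient.mk_surjective (by rwa [mk_ker])
end

section
/- Let R be a commutative ring such that for every a ∈ R, either a or 1−a is stable. Then R is locally stable. -/
/-!
Write `u * a + v * b = 1` and put `c = a * (u + b * (u * v - 1))`. Then `a ∣ c` and
`1 - c = b * (a + b * v ^ 2)`, and stability passes from an element to its divisors because
stable range 1 passes to quotient rings. So `a = a + b * 0` is stable if `c` is, and
`a + b * v ^ 2` is stable if `1 - c` is.
-/

theorem Ideal.span_singleton_sup_span_singleton_eq_top_iff {R : Type*} [CommRing R] (a b : R) :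
    Ideal.span {a} ⊔ Ideal.span {b} = ⊤ ↔ IsCoprime a b := by
  rw [← Ideal.isCoprime_iff_sup_eq, Ideal.isCoprime_span_singleton_iff]

theorem hasStableRange1_iff_isCoprime (R : Type*) [CommRing R] :
    HasStableRange1 R ↔ ∀ a b : R, IsCoprime a b → ∃ y : R, IsUnit (a + b * y) := by
  simp only [HasStableRange1, Ideal.span_singleton_sup_span_singleton_eq_top_iff]

theorem HasStableRange1.of_surjective {A B : Type*} [CommRing A] [CommRing B]
    (f : A →+* B) (hf : Function.Surjective f) (hA : HasStableRange1 A) :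
    HasStableRange1 B := by
  rw [hasStableRange1_iff_isCoprime] at hA ⊢
  rintro p q ⟨c, d, hcd⟩
  obtain ⟨P, rfl⟩ := hf p
  obtain ⟨C, rfl⟩ := hf c
  -- `P` and `1 - C * P` are trivially coprime, and `f (1 - C * P) = d * q`.
  obtain ⟨t, ht⟩ := hA P (1 - C * P) ⟨C, 1, by ring⟩
  refine ⟨d * f t, ?_⟩
  convert ht.map f using 1
  rw [map_add, map_mul, map_sub, map_one, map_mul, ← hcd]
  ring

theorem IsStableElem.of_dvd {R : Type*} [CommRing R] {x z : R} (hzx : z ∣ x)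
    (hx : IsStableElem x) : IsStableElem z := by
  have hle : Ideal.span {x} ≤ Ideal.span {z} := Ideal.span_singleton_le_span_singleton.mpr hzx
  exact hx.of_surjective (Ideal.Quotient.factor hle) (Ideal.Quotient.factor_surjective hle)

theorem stmt6 (R : Type*) [CommRing R]
    (h : ∀ a : R, IsStableElem a ∨ IsStableElem (1 - a)) :
    LocallyStable R := by
  intro a b hab
  obtain ⟨u, v, huv⟩ := (Ideal.span_singleton_sup_span_singleton_eq_top_iff a b).mp hab
  rcases h (a * (u + b * (u * v - 1))) with hc | hc
  · exact ⟨0, hc.of_dvd ⟨u + b * (u * v - 1), by ring⟩⟩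
  · refine ⟨v ^ 2, hc.of_dvd ⟨b, ?_⟩⟩
    linear_combination (-(1 + b * v)) * huv
end

section
/- Let R be a commutative Bézout ring and 0 ≠ c ∈ R. Suppose for all a,b ∈ R with aR + bR = R there exist r,s ∈ R such that c = rs, rR + sR = R, rR + aR = R, and sR + bR = R. Then R/cR is a clean ring. -/
/-!
Given `a`, apply the hypothesis to the comaximal pair `a, a - 1` to factor `c = r * s` with
`r, s` comaximal, `a` a unit modulo `r` and `a - 1` a unit modulo `s`. By the Chinese remainder
theorem `R/cR ≅ R/rR × R/sR`; the idempotent `e = (0, 1)` (lifted as `p * r` from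
`p * r + q * s = 1`) makes `a - e` a unit in both factors, hence in `R/cR`.
-/

open Ideal

section Clean

variable {R : Type*} [CommRing R]

lemma isCoprime_of_span_singleton_sup_eq_top {x y : R} (h : span {x} ⊔ span {y} = ⊤) :
    IsCoprime x y :=
  (isCoprime_span_singleton_iff x y).mp (isCoprime_iff_sup_eq.mpr h)

lemma isUnit_mk_span_singleton_of_isCoprime {x c : R} (h : IsCoprime x c) :
    IsUnit (Ideal.Quotient.mk (span {c}) x) := by
  obtain ⟨u, v, huv⟩ := h
  refine .of_mul_eq_one (Ideal.Quotient.mk _ u) ?_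
  rw [← map_mul, ← map_one (Ideal.Quotient.mk _), Ideal.Quotient.eq, mem_span_singleton]
  exact ⟨-v, by linear_combination huv⟩

lemma isIdempotentElem_mk_mul_of_add_eq_one {p q r s : R} (h : p * r + q * s = 1) :
    IsIdempotentElem (Ideal.Quotient.mk (span {r * s}) (p * r)) := by
  rw [IsIdempotentElem, ← map_mul, Ideal.Quotient.eq, mem_span_singleton]
  exact ⟨-(p * q), by linear_combination (p * r) * h⟩

lemma exists_isIdempotentElem_isUnit_mk_eq_add {r s a : R} (hrs : IsCoprime r s)
    (hra : IsCoprime a r) (hsa : IsCoprime (a - 1) s) :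
    ∃ e u : R ⧸ span {r * s}, IsIdempotentElem e ∧ IsUnit u ∧ Ideal.Quotient.mk _ a = e + u := by
  obtain ⟨p, q, hpq⟩ := hrs
  have hr : IsCoprime (a - p * r) r := by
    simpa [sub_eq_add_neg, mul_comm] using hra.add_mul_left_left (-p)
  have hs : IsCoprime (a - p * r) s := by
    have : a - p * r = a - 1 + s * q := by linear_combination -hpq
    simpa [this] using hsa.add_mul_left_left q
  refine ⟨_, _, isIdempotentElem_mk_mul_of_add_eq_one hpq,
    isUnit_mk_span_singleton_of_isCoprime (hr.mul_right hs), ?_⟩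
  rw [← map_add, add_sub_cancel]

end Clean

theorem stmt9_general (R : Type*) [CommRing R] (c : R)
    (h : ∀ a b : R, Ideal.span {a} ⊔ Ideal.span {b} = ⊤ →
      ∃ r s : R, c = r * s ∧ Ideal.span {r} ⊔ Ideal.span {s} = ⊤ ∧
        Ideal.span {r} ⊔ Ideal.span {a} = ⊤ ∧ Ideal.span {s} ⊔ Ideal.span {b} = ⊤) :
    IsCleanRing (R ⧸ Ideal.span {c}) := by
  intro x
  obtain ⟨a, rfl⟩ := Ideal.Quotient.mk_surjective x
  have ha : span {a} ⊔ span {a - 1} = ⊤ :=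
    (isCoprime_span_singleton_iff _ _).mpr ⟨1, -1, by ring⟩ |>.sup_eq
  obtain ⟨r, s, rfl, hrs, hra, hsa⟩ := h a (a - 1) ha
  exact exists_isIdempotentElem_isUnit_mk_eq_add (isCoprime_of_span_singleton_sup_eq_top hrs)
    (isCoprime_of_span_singleton_sup_eq_top hra).symm
    (isCoprime_of_span_singleton_sup_eq_top hsa).symm

theorem stmt9 (R : Type*) [CommRing R] [IsBezout R] (c : R) (hc : c ≠ 0)
    (h : ∀ a b : R, Ideal.span {a} ⊔ Ideal.span {b} = ⊤ →
      ∃ r s : R, c = r * s ∧ Ideal.span {r} ⊔ Ideal.span {s} = ⊤ ∧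
        Ideal.span {r} ⊔ Ideal.span {a} = ⊤ ∧ Ideal.span {s} ⊔ Ideal.span {b} = ⊤) :
    IsCleanRing (R ⧸ Ideal.span {c}) :=
  stmt9_general R c h
end

section
/- Let R be a Bézout domain and 0 ≠ c ∈ R such that R/cR is clean. Then for all a,b ∈ R with aR + bR = R there exist r,s ∈ R such that c = rs, rR + sR = R, rR + aR = R, and sR + bR = R. -/
/-!
Write `p * a + q * b = 1` and decompose the image of `p * a` in `R ⧸ (c)` as `e + u` with `e`
idempotent and `u` a unit. Then `c ∣ e * (1 - e)`, so `(c, e) * (c, 1 - e) = (c)`; in a Bézout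
domain both factors are principal, `(r)` and `(s)`, and after absorbing a unit into `s` we get
`c = r * s`. Modulo `c`, `u = p * a - e = (1 - e) - q * b`, so `(c, e) + (a)` and `(c, 1 - e) + (b)`
contain a unit, while `(r) + (s)` contains `e + (1 - e) = 1`.
-/

theorem IsCleanRing.exists_isIdempotentElem_isCoprime {S : Type*} [CommRing S]
    (hS : IsCleanRing S) {a b : S} (hab : IsCoprime a b) :
    ∃ e : S, IsIdempotentElem e ∧ IsCoprime e a ∧ IsCoprime (1 - e) b := by
  obtain ⟨p, q, hpq⟩ := hab
  obtain ⟨e, u, he, hu, hpa⟩ := hS (p * a)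
  obtain ⟨w, hw⟩ := hu.exists_left_inv
  exact ⟨e, he, ⟨-w, w * p, by linear_combination hw + w * hpa⟩,
    ⟨w, -(w * q), by linear_combination hw + w * hpa - w * hpq⟩⟩

theorem Ideal.span_pair_sup_span_singleton_eq_top_of_isCoprime_mk {R : Type*} [CommRing R]
    {c x y : R}
    (h : IsCoprime (Ideal.Quotient.mk (Ideal.span {c}) x) (Ideal.Quotient.mk (Ideal.span {c}) y)) :
    Ideal.span {c, x} ⊔ Ideal.span {y} = ⊤ := by
  rw [← Ideal.sup_eq_top_iff_isCoprime, ← Set.image_singleton, ← Set.image_singleton,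
    ← Ideal.map_span, ← Ideal.map_span, ← Ideal.map_sup] at h
  rw [Ideal.span_insert, sup_assoc, sup_comm, ← Ideal.mk_ker (I := Ideal.span {c}),
    ← Ideal.comap_map_of_surjective' _ Ideal.Quotient.mk_surjective, h, Ideal.comap_top]

theorem exists_dvd_mul_one_sub_of_isCleanRing_quotient {R : Type*} [CommRing R] {c : R}
    (h : IsCleanRing (R ⧸ Ideal.span {c})) {a b : R} (hab : IsCoprime a b) :
    ∃ e : R, c ∣ e * (1 - e) ∧ Ideal.span {c, e} ⊔ Ideal.span {a} = ⊤ ∧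
      Ideal.span {c, 1 - e} ⊔ Ideal.span {b} = ⊤ := by
  obtain ⟨ē, he, hea, heb⟩ := h.exists_isIdempotentElem_isCoprime (hab.map (Ideal.Quotient.mk _))
  obtain ⟨e, rfl⟩ := Ideal.Quotient.mk_surjective ē
  refine ⟨e, ?_, Ideal.span_pair_sup_span_singleton_eq_top_of_isCoprime_mk hea,
    Ideal.span_pair_sup_span_singleton_eq_top_of_isCoprime_mk (by simpa using heb)⟩
  rw [← Ideal.mem_span_singleton, ← Ideal.Quotient.eq_zero_iff_mem, map_mul, map_sub, map_one,
    he.mul_one_sub_self]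

theorem Ideal.span_pair_mul_span_pair_one_sub_of_dvd {R : Type*} [CommRing R] {c e : R}
    (h : c ∣ e * (1 - e)) : Ideal.span {c, e} * Ideal.span {c, 1 - e} = Ideal.span {c} := by
  apply le_antisymm
  · obtain ⟨k, hk⟩ := h
    refine Ideal.mul_le.mpr ?_
    rintro _ hx _ hy
    obtain ⟨α, β, rfl⟩ := Ideal.mem_span_pair.mp hx
    obtain ⟨γ, δ, rfl⟩ := Ideal.mem_span_pair.mp hy
    exact Ideal.mem_span_singleton'.mpr
      ⟨α * γ * c + α * δ * (1 - e) + β * γ * e + β * δ * k, by linear_combination -(β * δ * hk)⟩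
  · rw [Ideal.span_singleton_le_iff_mem]
    convert add_mem (Ideal.mul_mem_mul (Ideal.subset_span (by simp) : e ∈ Ideal.span {c, e})
      (Ideal.subset_span (by simp) : c ∈ Ideal.span {c, 1 - e}))
      (Ideal.mul_mem_mul (Ideal.subset_span (by simp) : c ∈ Ideal.span {c, e})
      (Ideal.subset_span (by simp) : 1 - e ∈ Ideal.span {c, 1 - e})) using 1
    ring

theorem exists_eq_mul_span_eq_of_dvd_mul_one_sub {R : Type*} [CommRing R] [IsDomain R]
    [IsBezout R] {c e : R} (h : c ∣ e * (1 - e)) :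
    ∃ r s : R, c = r * s ∧ Ideal.span {r} = Ideal.span {c, e} ∧
      Ideal.span {s} = Ideal.span {c, 1 - e} := by
  have hassoc : Associated (IsBezout.gcd c e * IsBezout.gcd c (1 - e)) c := by
    rw [← Ideal.span_singleton_eq_span_singleton, ← Ideal.span_singleton_mul_span_singleton,
      IsBezout.span_gcd, IsBezout.span_gcd, Ideal.span_pair_mul_span_pair_one_sub_of_dvd h]
  obtain ⟨u, hu⟩ := hassoc
  exact ⟨IsBezout.gcd c e, IsBezout.gcd c (1 - e) * u, by rw [← mul_assoc]; exact hu.symm,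
    IsBezout.span_gcd c e, by rw [Ideal.span_singleton_mul_right_unit u.isUnit, IsBezout.span_gcd]⟩

theorem Ideal.span_pair_sup_span_pair_one_sub_eq_top {R : Type*} [CommRing R] (c e : R) :
    Ideal.span {c, e} ⊔ Ideal.span {c, 1 - e} = ⊤ :=
  top_unique <| (Ideal.sup_eq_top_iff_isCoprime e (1 - e)).mpr ⟨1, 1, by ring⟩ ▸
    sup_le_sup (Ideal.span_mono (by simp)) (Ideal.span_mono (by simp))

theorem stmt10_general (R : Type*) [CommRing R] [IsDomain R] [IsBezout R] (c : R)
    (h : IsCleanRing (R ⧸ Ideal.span {c})) :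
    ∀ a b : R, Ideal.span {a} ⊔ Ideal.span {b} = ⊤ →
      ∃ r s : R, c = r * s ∧ Ideal.span {r} ⊔ Ideal.span {s} = ⊤ ∧
        Ideal.span {r} ⊔ Ideal.span {a} = ⊤ ∧ Ideal.span {s} ⊔ Ideal.span {b} = ⊤ := by
  intro a b hab
  obtain ⟨e, hce, hea, heb⟩ :=
    exists_dvd_mul_one_sub_of_isCleanRing_quotient h ((Ideal.sup_eq_top_iff_isCoprime a b).mp hab)
  obtain ⟨r, s, hrs, hr, hs⟩ := exists_eq_mul_span_eq_of_dvd_mul_one_sub hce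
  refine ⟨r, s, hrs, ?_, hr ▸ hea, hs ▸ heb⟩
  rw [hr, hs]
  exact Ideal.span_pair_sup_span_pair_one_sub_eq_top c e

theorem stmt10 (R : Type*) [CommRing R] [IsDomain R] [IsBezout R] (c : R) (hc : c ≠ 0)
    (h : IsCleanRing (R ⧸ Ideal.span {c})) :
    ∀ a b : R, Ideal.span {a} ⊔ Ideal.span {b} = ⊤ →
      ∃ r s : R, c = r * s ∧ Ideal.span {r} ⊔ Ideal.span {s} = ⊤ ∧
        Ideal.span {r} ⊔ Ideal.span {a} = ⊤ ∧ Ideal.span {s} ⊔ Ideal.span {b} = ⊤ :=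
  stmt10_general R c h
end

section
/- Every stably free module over a commutative locally stable ring is free. -/
/-!
Over a locally stable ring every unimodular vector `a ∈ Rⁿ` is carried to `e₀` by an
automorphism. Write `∑ aᵢ xᵢ = 1` and `c = ∑_{i ≥ 1} aᵢ xᵢ`, so that `a₀ x₀ + c = 1`; local
stability gives `z` with `R/(d)` of stable range 1, where `d = a₀ + c z`. A transvection replaces
`a₀` by `d`; modulo `d` the row `(a₁, …)` is still unimodular, so stable range 1 of `R/(d)` lets a
second transvection replace `a₁` by some `b` coprime to `d`. A determinant-one block on the first
two coordinates then makes the first coordinate `1`, and a last transvection reaches `e₀`.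
Consequently `P × R ≅ Rⁿ⁺¹` forces `P ≅ Rⁿ`, and the free summand of a stably free module can be
cancelled one copy of `R` at a time.
-/

open Module

section

variable {R : Type*} [CommRing R]

theorem HasStableRange1.exists_isUnit_add_sum_mul (h : HasStableRange1 R) {k : ℕ}
    {b x : Fin (k + 1) → R} (hx : ∑ i, b i * x i = 1) :
    ∃ t : Fin k → R, IsUnit (b 0 + ∑ i, b i.succ * t i) := by
  rw [Fin.sum_univ_succ] at hx
  set c := ∑ i : Fin k, b i.succ * x i.succ
  have hc : IsCoprime (b 0) c := ⟨x 0, 1, by linear_combination hx⟩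
  obtain ⟨y, hy⟩ := h (b 0) c ((Ideal.isCoprime_span_singleton_iff _ _).2 hc).sup_eq
  refine ⟨fun i => x i.succ * y, ?_⟩
  simpa only [c, Finset.sum_mul, mul_assoc] using hy

theorem isCoprime_of_isUnit_mk_span_singleton {d b : R}
    (h : IsUnit (Ideal.Quotient.mk (Ideal.span {d}) b)) : IsCoprime d b := by
  obtain ⟨u, hu⟩ := isUnit_iff_exists_inv.1 h
  obtain ⟨u, rfl⟩ := Ideal.Quotient.mk_surjective u
  rw [← map_mul, ← map_one (Ideal.Quotient.mk _), Ideal.Quotient.eq,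
    Ideal.mem_span_singleton'] at hu
  obtain ⟨s, hs⟩ := hu
  exact ⟨-s, u, by linear_combination -hs⟩

theorem LocallyStable.exists_isCoprime_add_sum (h : LocallyStable R) {k : ℕ}
    {a x : Fin (k + 2) → R} (hx : ∑ i, a i * x i = 1) :
    ∃ (y : Fin (k + 1) → R) (t : Fin k → R),
      IsCoprime (a 0 + ∑ i, y i * a i.succ) (a 1 + ∑ i, t i * a i.succ.succ) := by
  rw [Fin.sum_univ_succ] at hx
  set c := ∑ i : Fin (k + 1), a i.succ * x i.succ
  have hc : IsCoprime (a 0) c := ⟨x 0, 1, by linear_combination hx⟩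
  obtain ⟨z, hz⟩ := h (a 0) c ((Ideal.isCoprime_span_singleton_iff _ _).2 hc).sup_eq
  set d := a 0 + c * z
  have hd : d = a 0 + ∑ i : Fin (k + 1), z * x i.succ * a i.succ := by
    simp only [d, c, Finset.sum_mul]
    congr 1
    exact Finset.sum_congr rfl fun i _ => by ring
  -- `(a 1, …, a (k + 1))` stays unimodular modulo `d`, since `c (1 - z x 0) ≡ 1`.
  have hunim : ∑ i : Fin (k + 1), Ideal.Quotient.mk (Ideal.span {d}) (a i.succ) *
      Ideal.Quotient.mk (Ideal.span {d}) (x i.succ * (1 - z * x 0)) = 1 := by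
    simp only [← map_mul, ← map_sum, ← map_one (Ideal.Quotient.mk _), Ideal.Quotient.eq,
      Ideal.mem_span_singleton']
    refine ⟨-x 0, ?_⟩
    simp only [d, ← mul_assoc, ← Finset.sum_mul]
    linear_combination -hx
  obtain ⟨t, ht⟩ := hz.exists_isUnit_add_sum_mul hunim
  choose t' ht' using fun i => Ideal.Quotient.mk_surjective (t i)
  refine ⟨fun i => z * x i.succ, t', hd ▸ isCoprime_of_isUnit_mk_span_singleton ?_⟩
  simpa [map_add, map_sum, map_mul, ht', mul_comm] using ht

/-- The matrix `!![p, q; r, s]` acting on the first two coordinates. Transvections alone would not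
do here: for rows of length two, elementary matrices need not act transitively. -/
def finTwoBlock (k : ℕ) (p q r s : R) : (Fin (k + 2) → R) →ₗ[R] (Fin (k + 2) → R) :=
  LinearMap.pi <| Fin.cons (p • LinearMap.proj 0 + q • LinearMap.proj 1) <|
    Fin.cons (r • LinearMap.proj 0 + s • LinearMap.proj 1) fun i => LinearMap.proj i.succ.succ

@[simp] lemma finTwoBlock_apply_zero (k : ℕ) (p q r s : R) (v : Fin (k + 2) → R) :
    finTwoBlock k p q r s v 0 = p * v 0 + q * v 1 := by
  simp [finTwoBlock]

@[simp] lemma finTwoBlock_apply_one (k : ℕ) (p q r s : R) (v : Fin (k + 2) → R) :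
    finTwoBlock k p q r s v 1 = r * v 0 + s * v 1 := by
  simp [finTwoBlock]

@[simp] lemma finTwoBlock_apply_succ_succ (k : ℕ) (p q r s : R) (v : Fin (k + 2) → R)
    (i : Fin k) : finTwoBlock k p q r s v i.succ.succ = v i.succ.succ := by
  simp [finTwoBlock]

lemma finTwoBlock_comp_adjugate (k : ℕ) (p q r s : R) (h : p * s - q * r = 1) :
    finTwoBlock k p q r s ∘ₗ finTwoBlock k s (-q) (-r) p = LinearMap.id := by
  refine LinearMap.ext fun v => funext fun i => ?_
  induction i using Fin.cases with
  | zero =>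
    simp only [LinearMap.comp_apply, finTwoBlock_apply_zero, finTwoBlock_apply_one,
      LinearMap.id_apply]
    linear_combination v 0 * h
  | succ i =>
    induction i using Fin.cases with
    | zero =>
      simp only [Fin.succ_zero_eq_one, LinearMap.comp_apply, finTwoBlock_apply_zero,
        finTwoBlock_apply_one, LinearMap.id_apply]
      linear_combination v 1 * h
    | succ i => simp

def finTwoBlockEquiv (k : ℕ) {p q r s : R} (h : p * s - q * r = 1) :
    (Fin (k + 2) → R) ≃ₗ[R] (Fin (k + 2) → R) :=
  .ofLinearMap (finTwoBlock k p q r s) (finTwoBlock k s (-q) (-r) p)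
    (finTwoBlock_comp_adjugate k p q r s h)
    (by simpa using finTwoBlock_comp_adjugate k s (-q) (-r) p (by linear_combination h))

theorem exists_linearEquiv_apply_eq_single_of_apply_zero_eq_one {n : ℕ}
    {v : Fin (n + 1) → R} (hv : v 0 = 1) :
    ∃ g : (Fin (n + 1) → R) ≃ₗ[R] (Fin (n + 1) → R), g v = Pi.single 0 1 := by
  have hw : LinearMap.proj (R := R) (φ := fun _ => R) 0 (Pi.single 0 1 - v) = 0 := by
    simp [hv]
  exact ⟨.transvection hw, by simp [LinearMap.transvection.apply, hv]⟩

theorem exists_linearEquiv_apply_eq_single_of_isUnit {n : ℕ}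
    {v : Fin (n + 1) → R} (hv : IsUnit (v 0)) :
    ∃ g : (Fin (n + 1) → R) ≃ₗ[R] (Fin (n + 1) → R), g v = Pi.single 0 1 := by
  obtain ⟨u, hu⟩ := hv
  obtain ⟨g, hg⟩ := exists_linearEquiv_apply_eq_single_of_apply_zero_eq_one
    (v := LinearEquiv.smulOfUnit u⁻¹ v) (by simp [LinearEquiv.smulOfUnit, ← hu, Units.smul_def])
  exact ⟨LinearEquiv.smulOfUnit u⁻¹ ≪≫ₗ g, hg⟩

theorem exists_linearEquiv_apply_eq_single_of_isCoprime {k : ℕ}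
    {v : Fin (k + 2) → R} (hv : IsCoprime (v 0) (v 1)) :
    ∃ g : (Fin (k + 2) → R) ≃ₗ[R] (Fin (k + 2) → R), g v = Pi.single 0 1 := by
  obtain ⟨p, q, hpq⟩ := hv
  let g := finTwoBlockEquiv k (p := p) (q := q) (r := -v 1) (s := v 0) (by linear_combination hpq)
  obtain ⟨g', hg'⟩ := exists_linearEquiv_apply_eq_single_of_apply_zero_eq_one (v := g v)
    (by simpa [g, finTwoBlockEquiv] using hpq)
  exact ⟨g ≪≫ₗ g', hg'⟩

theorem exists_linearEquiv_apply_eq_single_of_isCoprime_add_sum {k : ℕ} (a : Fin (k + 2) → R)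
    (y : Fin (k + 1) → R) (t : Fin k → R)
    (h : IsCoprime (a 0 + ∑ i, y i * a i.succ) (a 1 + ∑ i, t i * a i.succ.succ)) :
    ∃ g : (Fin (k + 2) → R) ≃ₗ[R] (Fin (k + 2) → R), g a = Pi.single 0 1 := by
  let f₁ : Dual R (Fin (k + 2) → R) := ∑ i, y i • LinearMap.proj i.succ
  let f₂ : Dual R (Fin (k + 2) → R) := ∑ i, t i • LinearMap.proj i.succ.succ
  have hf₁ : f₁ (Pi.single 0 1) = 0 := by simp [f₁]
  have hf₂ : f₂ (Pi.single 1 1) = 0 := by simp [f₂, Fin.succ_succ_ne_one]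
  let g₁ := LinearEquiv.transvection hf₁
  let g₂ := LinearEquiv.transvection hf₂
  obtain ⟨g₃, hg₃⟩ := exists_linearEquiv_apply_eq_single_of_isCoprime (v := g₂ (g₁ a))
    (by simpa [g₁, g₂, f₁, f₂, LinearMap.transvection.apply, Pi.single_apply] using h)
  exact ⟨g₁ ≪≫ₗ g₂ ≪≫ₗ g₃, hg₃⟩

theorem LocallyStable.exists_linearEquiv_apply_eq_single (h : LocallyStable R) {n : ℕ}
    {v : Fin (n + 1) → R} {f : Dual R (Fin (n + 1) → R)} (hf : f v = 1) :
    ∃ g : (Fin (n + 1) → R) ≃ₗ[R] (Fin (n + 1) → R), g v = Pi.single 0 1 := by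
  classical
  simp only [LinearMap.pi_apply_eq_sum_univ f v, smul_eq_mul] at hf
  cases n with
  | zero =>
    exact exists_linearEquiv_apply_eq_single_of_isUnit
      (.of_mul_eq_one _ (by simpa using hf))
  | succ k =>
    obtain ⟨y, t, hyt⟩ := h.exists_isCoprime_add_sum hf
    exact exists_linearEquiv_apply_eq_single_of_isCoprime_add_sum v y t hyt

section Cancellation

variable {M N : Type*} [AddCommGroup M] [Module R M] [AddCommGroup N] [Module R N]

lemma fst_apply_fst_zero {S : (M × R) ≃ₗ[R] (N × R)} (hS : S (0, 1) = (0, 1)) (z : M × R) :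
    (S (z.1, 0)).1 = (S z).1 := by
  have hz : z = (z.1, 0) + z.2 • (0, 1) := by ext <;> simp
  conv_rhs => rw [hz, map_add, map_smul, hS]
  simp

def LinearEquiv.prodCancel (T : (M × R) ≃ₗ[R] (N × R)) (hT : T (0, 1) = (0, 1)) :
    M ≃ₗ[R] N where
  toLinearMap := LinearMap.fst R N R ∘ₗ T.toLinearMap ∘ₗ LinearMap.inl R M R
  invFun n := (T.symm (n, 0)).1
  left_inv m := by
    have hT' : T.symm (0, 1) = (0, 1) := by simp [← hT]
    simp [fst_apply_fst_zero hT']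
  right_inv n := by
    simp [fst_apply_fst_zero hT]

end Cancellation

section StablyFree

variable {P : Type*} [AddCommGroup P] [Module R P]

theorem LocallyStable.exists_linearEquiv_pi_of_prod_self (h : LocallyStable R) {n : ℕ}
    (e : (P × R) ≃ₗ[R] (Fin n → R)) : ∃ k, Nonempty (P ≃ₗ[R] (Fin k → R)) := by
  cases n with
  | zero =>
    have : Subsingleton (P × R) := e.toEquiv.subsingleton
    have : Subsingleton P := (Prod.fst_surjective (β := R)).subsingleton
    exact ⟨0, ⟨.ofSubsingleton _ _⟩⟩
  | succ n =>
    obtain ⟨g, hg⟩ := h.exists_linearEquiv_apply_eq_single (v := e (0, 1))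
      (f := LinearMap.snd R P R ∘ₗ e.symm.toLinearMap) (by simp)
    let T := e ≪≫ₗ g ≪≫ₗ (Fin.consLinearEquiv R fun _ => R).symm ≪≫ₗ
      LinearEquiv.prodComm R R (Fin n → R)
    have hT : T (0, 1) = (0, 1) := by
      ext i
      · simp [T, hg, Fin.tail, Fin.succ_ne_zero]
      · simp [T, hg]
    exact ⟨n, ⟨.prodCancel T hT⟩⟩

theorem LocallyStable.exists_linearEquiv_pi_of_prod_pi (h : LocallyStable R) :
    ∀ {m n : ℕ}, ((P × (Fin m → R)) ≃ₗ[R] (Fin n → R)) → ∃ k, Nonempty (P ≃ₗ[R] (Fin k → R))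
  | 0, n, e => ⟨n, ⟨LinearEquiv.prodUnique.symm ≪≫ₗ e⟩⟩
  | m + 1, _, e => by
    obtain ⟨k, ⟨e'⟩⟩ := h.exists_linearEquiv_pi_of_prod_self <|
      LinearEquiv.prodAssoc R P _ R ≪≫ₗ (LinearEquiv.refl R P).prodCongr
        (LinearEquiv.prodComm R _ R ≪≫ₗ Fin.consLinearEquiv R fun _ => R) ≪≫ₗ e
    exact h.exists_linearEquiv_pi_of_prod_pi e'

end StablyFree

end

theorem stmt16 (R : Type*) [CommRing R] (h : LocallyStable R)
    (P : Type*) [AddCommGroup P] [Module R P]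
    (hsf : ∃ m n : ℕ, Nonempty ((P × (Fin m → R)) ≃ₗ[R] (Fin n → R))) :
    Module.Free R P := by
  obtain ⟨m, n, ⟨e⟩⟩ := hsf
  obtain ⟨k, ⟨e'⟩⟩ := h.exists_linearEquiv_pi_of_prod_pi e
  exact .of_equiv e'.symm
end
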